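/- (Proposition 1) Let {C_α}_{α∈ℕ} be a countable family of nonempty, bounded, open subsets of ℝ³ that are pairwise disjoint, whose closures cover ℝ³, and such that every compact set K ⊆ ℝ³ is contained in the union of finitely many of the closures cl(C_α). Let B : [0,∞) × [0,∞) → [0,∞) be measurable. Then for every pair of indices (β, γ), the set {α ∈ ℕ : G_{α;β,γ} ≠ 0} is finite. -/

import Mathlib

/-!
The collision points `P ± (|V|/2) u` lie on the sphere of radius `|V|/2` about the midpoint
`P`, so for `ξ ∈ C_β`, `ξ* ∈ C_γ` they stay in the ball of radius `R_β + R_γ`, where the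
cells lie in `closedBall 0 R_β` and `closedBall 0 R_γ`. Finitely many cell closures cover
that ball, and every other cell, being open and disjoint from the rest, misses it; for such
`α` the integrand of `G(χ_α; ξ, ξ*)` vanishes identically.
-/

open MeasureTheory Real ENNReal

noncomputable section

abbrev V3 := EuclideanSpace ℝ (Fin 3)

/-- The unit vector u(s,θ) = (√(1−s²)cos θ, √(1−s²)sin θ, s). -/
def uvec (s θ : ℝ) : V3 :=
  (WithLp.equiv 2 (Fin 3 → ℝ)).symm
    ![Real.sqrt (1 - s ^ 2) * Real.cos θ, Real.sqrt (1 - s ^ 2) * Real.sin θ, s]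

/-- The gain kernel G(φ; ξ, ξ*) for a nonnegative test function φ,
with values in [0,∞]. -/
def gainK (B : ℝ → ℝ → ℝ) (φ : V3 → ℝ) (ξ ξs : V3) : ℝ≥0∞ :=
  ENNReal.ofReal (‖ξ - ξs‖ / 8) *
    ∫⁻ s in Set.Icc (-1 : ℝ) 1, ∫⁻ θ in Set.Icc (-π) π,
      ENNReal.ofReal (B ((1 / 2) * ‖(ξ - ξs) - ‖ξ - ξs‖ • uvec s θ‖) ‖ξ - ξs‖) *
        (ENNReal.ofReal (φ ((1 / 2 : ℝ) • (ξ + ξs) + ((1 / 2) * ‖ξ - ξs‖) • uvec s θ)) +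
         ENNReal.ofReal (φ ((1 / 2 : ℝ) • (ξ + ξs) - ((1 / 2) * ‖ξ - ξs‖) • uvec s θ)))

/-- The coefficient G_{α;β,γ}: the average of G(χ_α; ·, ·) over C_β × C_γ. -/
def Gcoef (B : ℝ → ℝ → ℝ) (Cα Cβ Cγ : Set V3) : ℝ≥0∞ :=
  (volume Cβ)⁻¹ * (volume Cγ)⁻¹ *
    ∫⁻ ξ in Cβ, ∫⁻ ξs in Cγ, gainK B (Cα.indicator fun _ => 1) ξ ξs

lemma norm_uvec {s : ℝ} (hs : s ∈ Set.Icc (-1 : ℝ) 1) (θ : ℝ) : ‖uvec s θ‖ = 1 := by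
  have hsq : Real.sqrt (1 - s ^ 2) ^ 2 = 1 - s ^ 2 :=
    Real.sq_sqrt (by nlinarith [hs.1, hs.2])
  have htrig := Real.sin_sq_add_cos_sq θ
  rw [EuclideanSpace.norm_eq, Real.sqrt_eq_one]
  simp only [uvec, WithLp.equiv_symm_apply, PiLp.toLp_apply, Fin.sum_univ_three,
    Matrix.cons_val_zero, Matrix.cons_val_one, Matrix.cons_val_two, Matrix.head_cons,
    Matrix.tail_cons, Real.norm_eq_abs, sq_abs]
  linear_combination (Real.sin θ ^ 2 + Real.cos θ ^ 2) * hsq + (1 - s ^ 2) * htrig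

section CollisionPoints

variable {E : Type*} [NormedAddCommGroup E] [NormedSpace ℝ E]

lemma norm_midpoint_add_smul_le (x y : E) {u : E} (hu : ‖u‖ ≤ 1) :
    ‖(1 / 2 : ℝ) • (x + y) + ((1 / 2) * ‖x - y‖) • u‖ ≤ ‖x‖ + ‖y‖ := by
  have hmid : ‖(1 / 2 : ℝ) • (x + y)‖ ≤ (‖x‖ + ‖y‖) / 2 := by
    rw [norm_smul, Real.norm_of_nonneg (by norm_num)]
    linarith [norm_add_le x y]
  have hrad : ‖((1 / 2) * ‖x - y‖) • u‖ ≤ (‖x‖ + ‖y‖) / 2 := by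
    rw [norm_smul, Real.norm_of_nonneg (by positivity)]
    nlinarith [norm_sub_le x y, norm_nonneg u, norm_nonneg (x - y)]
  linarith [norm_add_le ((1 / 2 : ℝ) • (x + y)) (((1 / 2) * ‖x - y‖) • u)]

lemma norm_midpoint_sub_smul_le (x y : E) {u : E} (hu : ‖u‖ ≤ 1) :
    ‖(1 / 2 : ℝ) • (x + y) - ((1 / 2) * ‖x - y‖) • u‖ ≤ ‖x‖ + ‖y‖ := by
  rw [sub_eq_add_neg, ← smul_neg]
  exact norm_midpoint_add_smul_le x y (by rwa [norm_neg])

end CollisionPoints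

lemma gainK_eq_zero_of_eqOn_closedBall (B : ℝ → ℝ → ℝ) {φ : V3 → ℝ} {ξ ξs : V3}
    (hφ : Set.EqOn φ 0 (Metric.closedBall 0 (‖ξ‖ + ‖ξs‖))) :
    gainK B φ ξ ξs = 0 := by
  refine mul_eq_zero_of_right _ ?_
  rw [← lintegral_zero]
  refine setLIntegral_congr_fun measurableSet_Icc fun s hs => ?_
  refine (lintegral_congr fun θ => ?_).trans lintegral_zero
  have hu : ‖uvec s θ‖ ≤ 1 := (norm_uvec hs θ).le
  rw [hφ (mem_closedBall_zero_iff.2 (norm_midpoint_add_smul_le ξ ξs hu)),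
    hφ (mem_closedBall_zero_iff.2 (norm_midpoint_sub_smul_le ξ ξs hu))]
  simp

lemma Gcoef_eq_zero_of_forall_gainK_eq_zero (B : ℝ → ℝ → ℝ) {Cα Cβ Cγ : Set V3}
    (hβ : MeasurableSet Cβ) (hγ : MeasurableSet Cγ)
    (h : ∀ ξ ∈ Cβ, ∀ ξs ∈ Cγ, gainK B (Cα.indicator fun _ => 1) ξ ξs = 0) :
    Gcoef B Cα Cβ Cγ = 0 := by
  refine mul_eq_zero_of_right _ ((setLIntegral_congr_fun hβ fun ξ hξ => ?_).trans lintegral_zero)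
  exact (setLIntegral_congr_fun hγ (h ξ hξ)).trans lintegral_zero

lemma disjoint_of_subset_iUnion_closure {ι X : Type*} [TopologicalSpace X] {C : ι → Set X}
    (hdisj : Pairwise (Function.onFun Disjoint C)) {α : ι} (hα : IsOpen (C α))
    {K : Set X} {S : Finset ι} (hK : K ⊆ ⋃ i ∈ S, closure (C i)) (hαS : α ∉ S) :
    Disjoint (C α) K := by
  refine Set.disjoint_left.2 fun p hpα hpK => ?_
  obtain ⟨i, hiS, hpi⟩ := Set.mem_iUnion₂.1 (hK hpK)
  have hαi : α ≠ i := by rintro rfl; exact hαS hiS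
  exact Set.disjoint_left.1 ((hdisj hαi).closure_right hα) hpα hpi

theorem Gcoef_finitely_many_nonzero_general
    (C : ℕ → Set V3)
    (hbd : ∀ α, Bornology.IsBounded (C α))
    (hop : ∀ α, IsOpen (C α))
    (hdisj : Pairwise (Function.onFun Disjoint C))
    (hcpt : ∀ K : Set V3, IsCompact K → ∃ S : Finset ℕ, K ⊆ ⋃ α ∈ S, closure (C α))
    (B : ℝ → ℝ → ℝ)
    (β γ : ℕ) :
    {α : ℕ | Gcoef B (C α) (C β) (C γ) ≠ 0}.Finite := by
  obtain ⟨Rβ, hRβ⟩ := (hbd β).subset_closedBall (0 : V3)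
  obtain ⟨Rγ, hRγ⟩ := (hbd γ).subset_closedBall (0 : V3)
  obtain ⟨S, hS⟩ := hcpt _ (isCompact_closedBall (0 : V3) (Rβ + Rγ))
  refine S.finite_toSet.subset fun α hα => by_contra fun hαS => hα ?_
  have hαK := disjoint_of_subset_iUnion_closure hdisj (hop α) hS hαS
  refine Gcoef_eq_zero_of_forall_gainK_eq_zero B (hop β).measurableSet (hop γ).measurableSet
    fun ξ hξ ξs hξs => gainK_eq_zero_of_eqOn_closedBall B fun p hp => ?_
  have hball : Metric.closedBall 0 (‖ξ‖ + ‖ξs‖) ⊆ Metric.closedBall (0 : V3) (Rβ + Rγ) :=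
    Metric.closedBall_subset_closedBall <| add_le_add
      (mem_closedBall_zero_iff.1 (hRβ hξ)) (mem_closedBall_zero_iff.1 (hRγ hξs))
  exact Set.indicator_of_notMem (hαK.notMem_of_mem_right (hball hp)) _

/-- **(Proposition 1)** For a partition of ℝ³ into countably many nonempty bounded open
cells whose closures cover ℝ³, such that every compact set is covered by finitely many
cell closures, and for any measurable nonnegative collision kernel B, the coefficients
G_{α;β,γ} vanish for all but finitely many α, for each fixed pair (β,γ). -/
theorem Gcoef_finitely_many_nonzero
    (C : ℕ → Set V3)
    (hne : ∀ α, (C α).Nonempty)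
    (hbd : ∀ α, Bornology.IsBounded (C α))
    (hop : ∀ α, IsOpen (C α))
    (hdisj : Pairwise (Function.onFun Disjoint C))
    (hcover : ⋃ α, closure (C α) = Set.univ)
    (hcpt : ∀ K : Set V3, IsCompact K → ∃ S : Finset ℕ, K ⊆ ⋃ α ∈ S, closure (C α))
    (B : ℝ → ℝ → ℝ) (hB : Measurable (Function.uncurry B)) (hBnn : ∀ x y, 0 ≤ B x y)
    (β γ : ℕ) :
    {α : ℕ | Gcoef B (C α) (C β) (C γ) ≠ 0}.Finite :=
  Gcoef_finitely_many_nonzero_general C hbd hop hdisj hcpt B β γ
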